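/- Let S be a nondecreasing càdlàg process with S(0) = 0 and σ ≥ 0 a random variable independent of S, with distribution function F continuous on [0,∞). For t ≥ 0 define the overshoot θ_t(η) = η(L_t(η)) - t where L_t(η) = inf{u ≥ 0 : η(u) > t}. Then for Ŝ = σ + S and all 0 ≤ t < t+s: P(θ_t(Ŝ) ≥ s) = 1 - F(t+s) + ∫₀^t P(θ_{t-v}(S) ≥ s) dF(v). -/

import Mathlib

/-!
Conditioning on the delay `σ = v`: the path `v + S` has overshoot `θ_t(v + S) = θ_{t-v}(S)`, which
is `v - t` when `v > t` because the path then starts above `t`. So the event `θ_t(Ŝ) ≥ s` is the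
disjoint union of `{σ ≥ t + s}` and `{σ ≤ t, θ_{t-σ}(S) ≥ s}`. The first has probability
`1 - F(t+s)` because continuity of `F` at `t + s > 0` rules out an atom there; by independence the
second is the integral of `P(θ_{t-v}(S) ≥ s)` against the law of `σ`, which lives on `[0, ∞)`.

For a nondecreasing path, `θ_r(η) ≥ s` says that `η` passes above `r` without taking a value in
`(r, r + s)`; by right-continuity this can be read off rational times, which makes the event
measurable for the product σ-algebra on paths.
-/

open MeasureTheory ProbabilityTheory Set Filter Topology

noncomputable def overshoot (t : ℝ) (η : ℝ → ℝ) : ℝ :=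
  η (sInf {u | 0 ≤ u ∧ t < η u}) - t

def jumpsOver (r s : ℝ) : Set (ℝ → ℝ) :=
  {η | (∃ q : ℚ, 0 ≤ (q : ℝ) ∧ r < η q) ∧ ∀ q : ℚ, 0 ≤ (q : ℝ) → η q ∉ Ioo r (r + s)}

def delayedJumpsOver (t s : ℝ) : Set (ℝ × (ℝ → ℝ)) :=
  {p | p.1 ≤ t ∧ p.2 ∈ jumpsOver (t - p.1) s}

theorem mem_of_forall_rat_mem {X : Type*} [TopologicalSpace X] {f : ℝ → X} {C : Set X}
    (hC : IsClosed C) {a u : ℝ} (hf : ContinuousWithinAt f (Ici u) u) (hu : a ≤ u)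
    (h : ∀ q : ℚ, a ≤ q → f q ∈ C) : f u ∈ C := by
  have hu_mem : u ∈ closure (Ioi u ∩ range ((↑) : ℚ → ℝ)) :=
    closure_minimal (Rat.denseRange_cast.open_subset_closure_inter isOpen_Ioi) isClosed_closure
      (by rw [closure_Ioi]; exact mem_Ici.2 le_rfl)
  refine hC.closure_subset_iff.2 ?_
    ((hf.mono fun x hx => Ioi_subset_Ici_self hx.1).mem_closure_image hu_mem)
  rintro _ ⟨_, ⟨hux, q, rfl⟩, rfl⟩
  exact h q (hu.trans hux.le)

section Overshoot

variable {η : ℝ → ℝ}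

theorem le_overshoot_iff (hmono : Monotone η) (hrc : ∀ u, ContinuousWithinAt η (Ici u) u)
    {r s : ℝ} (hs : 0 < s) :
    s ≤ overshoot r η ↔ (∃ u, 0 ≤ u ∧ r < η u) ∧ ∀ u, 0 ≤ u → η u ∉ Ioo r (r + s) := by
  rw [overshoot]
  set A := {u | 0 ≤ u ∧ r < η u}
  have hbdd : BddBelow A := ⟨0, fun u hu => hu.1⟩
  constructor
  · intro h
    have hne : A.Nonempty := by
      refine nonempty_iff_ne_empty.2 fun hA => ?_
      have hη0 : η 0 ≤ r := not_lt.1 fun h0 => eq_empty_iff_forall_notMem.1 hA 0 ⟨le_rfl, h0⟩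
      rw [hA, Real.sInf_empty] at h
      linarith
    refine ⟨hne, fun u hu hgap => ?_⟩
    have := hmono (csInf_le hbdd ⟨hu, hgap.1⟩)
    linarith [hgap.2]
  · rintro ⟨hne, hgap⟩
    have himage : η '' A ⊆ Ici (r + s) := by
      rintro _ ⟨u, ⟨hu, hru⟩, rfl⟩
      exact not_lt.1 fun h => hgap u hu ⟨hru, h⟩
    have hinf : η (sInf A) ∈ Ici (r + s) := isClosed_Ici.closure_subset_iff.2 himage
      (((hrc _).mono fun u hu => csInf_le hbdd hu).mem_closure_image (csInf_mem_closure hne hbdd))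
    linarith [mem_Ici.1 hinf]

theorem le_overshoot_iff_mem_jumpsOver (hmono : Monotone η)
    (hrc : ∀ u, ContinuousWithinAt η (Ici u) u) {r s : ℝ} (hs : 0 < s) :
    s ≤ overshoot r η ↔ η ∈ jumpsOver r s := by
  rw [le_overshoot_iff hmono hrc hs]
  refine and_congr ⟨?_, ?_⟩ ⟨fun h q hq => h q hq, ?_⟩
  · rintro ⟨u, hu, hru⟩
    obtain ⟨q, hq⟩ := exists_rat_gt u
    exact ⟨q, hu.trans hq.le, hru.trans_le (hmono hq.le)⟩
  · rintro ⟨q, hq, hrq⟩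
    exact ⟨q, hq, hrq⟩
  · exact fun h u hu => mem_of_forall_rat_mem isOpen_Ioo.isClosed_compl (hrc u) hu h

theorem overshoot_const_add (v t : ℝ) (η : ℝ → ℝ) :
    overshoot t (fun u => v + η u) = overshoot (t - v) η := by
  simp only [overshoot, sub_lt_iff_lt_add']
  ring

theorem overshoot_of_neg (h0 : η 0 = 0) {r : ℝ} (hr : r < 0) : overshoot r η = -r := by
  have hL : sInf {u | 0 ≤ u ∧ r < η u} = 0 :=
    IsLeast.csInf_eq ⟨⟨le_rfl, by rwa [h0]⟩, fun u hu => hu.1⟩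
  rw [overshoot, hL, h0, zero_sub]

theorem le_overshoot_const_add_iff (hmono : Monotone η)
    (hrc : ∀ u, ContinuousWithinAt η (Ici u) u) (h0 : η 0 = 0) {s : ℝ} (hs : 0 < s) (v t : ℝ) :
    s ≤ overshoot t (fun u => v + η u) ↔ t + s ≤ v ∨ (v ≤ t ∧ η ∈ jumpsOver (t - v) s) := by
  rw [overshoot_const_add]
  rcases le_or_gt v t with hvt | htv
  · have hv : ¬ t + s ≤ v := by linarith
    simp only [le_overshoot_iff_mem_jumpsOver hmono hrc hs, hv, hvt, true_and, false_or]
  · simp only [overshoot_of_neg h0 (sub_neg.2 htv), neg_sub, le_sub_iff_add_le', not_le.2 htv,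
      false_and, or_false]

end Overshoot

theorem measurableSet_setOf_mem_jumpsOver (s : ℝ) :
    MeasurableSet {p : ℝ × (ℝ → ℝ) | p.2 ∈ jumpsOver p.1 s} := by
  simp only [jumpsOver, mem_ofPred_eq, mem_Ioo, measurableSet_setOfPred]
  fun_prop

theorem measurableSet_jumpsOver (r s : ℝ) : MeasurableSet (jumpsOver r s) :=
  measurable_prodMk_left (measurableSet_setOf_mem_jumpsOver s)

theorem measurableSet_setOf_mem_jumpsOver_sub (t s : ℝ) :
    MeasurableSet {p : ℝ × (ℝ → ℝ) | p.2 ∈ jumpsOver (t - p.1) s} :=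
  (measurableSet_setOf_mem_jumpsOver s).preimage
    (by fun_prop : Measurable fun p : ℝ × (ℝ → ℝ) => (t - p.1, p.2))

theorem measurableSet_delayedJumpsOver (t s : ℝ) : MeasurableSet (delayedJumpsOver t s) :=
  (measurableSet_le measurable_fst measurable_const).inter
    (measurableSet_setOf_mem_jumpsOver_sub t s)

theorem measurable_measure_jumpsOver_sub (ν : Measure (ℝ → ℝ)) [SFinite ν] (t s : ℝ) :
    Measurable fun v => ν (jumpsOver (t - v) s) :=
  measurable_measure_prodMk_left (measurableSet_setOf_mem_jumpsOver_sub t s)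

theorem lintegral_measure_delayedJumpsOver {μ : Measure ℝ} (hμ : ∀ᵐ v ∂μ, 0 ≤ v)
    (ν : Measure (ℝ → ℝ)) (t s : ℝ) :
    ∫⁻ v, ν (Prod.mk v ⁻¹' delayedJumpsOver t s) ∂μ
      = ∫⁻ v in Icc 0 t, ν (jumpsOver (t - v) s) ∂μ := by
  rw [← lintegral_indicator measurableSet_Icc]
  refine lintegral_congr_ae (hμ.mono fun v hv => ?_)
  by_cases hvt : v ≤ t
  · simp [delayedJumpsOver, hvt, hv]
  · simp [delayedJumpsOver, hvt]

theorem ProbabilityTheory.IndepFun.measure_preimage_prodMk {Ω α β : Type*} [MeasurableSpace Ω]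
    [MeasurableSpace α] [MeasurableSpace β] {μ : Measure Ω} [IsFiniteMeasure μ] {X : Ω → α}
    {Y : Ω → β} (hXY : IndepFun X Y μ) (hX : Measurable X) (hY : Measurable Y)
    {Q : Set (α × β)} (hQ : MeasurableSet Q) :
    μ ((fun ω => (X ω, Y ω)) ⁻¹' Q) = ∫⁻ x, μ.map Y (Prod.mk x ⁻¹' Q) ∂(μ.map X) := by
  rw [← Measure.map_apply (hX.prodMk hY) hQ,
    (indepFun_iff_map_prod_eq_prod_map_map hX.aemeasurable hY.aemeasurable).1 hXY,
    Measure.prod_apply hQ]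

theorem ProbabilityTheory.measure_Ici_toReal_eq_one_sub_cdf {μ : Measure ℝ} [IsProbabilityMeasure μ]
    {x : ℝ} (h : ContinuousWithinAt (cdf μ) (Iio x) x) : (μ (Ici x)).toReal = 1 - cdf μ x := by
  calc (μ (Ici x)).toReal = ((cdf μ).measure (Ici x)).toReal := by rw [measure_cdf]
    _ = 1 - cdf μ x := by
      rw [StieltjesFunction.measure_Ici _ (tendsto_cdf_atTop μ), leftLim_eq_of_tendsto h,
        ENNReal.toReal_ofReal (sub_nonneg.2 (cdf_le_one μ x))]

theorem setOf_le_overshoot_const_add_eq_union {Ω : Type*} {S : Ω → ℝ → ℝ} {σ : Ω → ℝ}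
    (hSmono : ∀ ω, Monotone (S ω)) (hSrc : ∀ ω u, ContinuousWithinAt (S ω) (Ici u) u)
    (hS0 : ∀ ω, S ω 0 = 0) {s : ℝ} (hs : 0 < s) (t : ℝ) :
    {ω | s ≤ overshoot t (fun u => σ ω + S ω u)}
      = σ ⁻¹' Ici (t + s) ∪ (fun ω => (σ ω, S ω)) ⁻¹' delayedJumpsOver t s :=
  ext fun ω => le_overshoot_const_add_iff (hSmono ω) (hSrc ω) (hS0 ω) hs (σ ω) t

theorem measure_le_overshoot_eq_map_jumpsOver {Ω : Type*} [MeasurableSpace Ω] (μ : Measure Ω)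
    {S : Ω → ℝ → ℝ} (hS : Measurable S) (hSmono : ∀ ω, Monotone (S ω))
    (hSrc : ∀ ω u, ContinuousWithinAt (S ω) (Ici u) u) {s : ℝ} (hs : 0 < s) (r : ℝ) :
    μ {ω | s ≤ overshoot r (S ω)} = μ.map S (jumpsOver r s) := by
  rw [Measure.map_apply hS (measurableSet_jumpsOver r s)]
  exact congrArg μ (ext fun ω => le_overshoot_iff_mem_jumpsOver (hSmono ω) (hSrc ω) hs)

/-- Overshoot decomposition for a delayed subordinator: let `S` be a nondecreasing
right-continuous process with `S(0) = 0` and `σ ≥ 0` a random delay independent of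
`S`, with continuous distribution function `F` on `[0,∞)`. For the overshoot
`θ_t(η) = η(L_t(η)) - t`, `L_t(η) = inf{u ≥ 0 : η(u) > t}`, and `Ŝ = σ + S`, one has
for all `0 ≤ t < t+s`:
`P(θ_t(Ŝ) ≥ s) = 1 - F(t+s) + ∫₀^t P(θ_{t-v}(S) ≥ s) dF(v)`. -/
theorem delayed_overshoot_decomposition {Ω : Type*} [MeasureSpace Ω]
    [IsProbabilityMeasure (ℙ : Measure Ω)]
    (S : Ω → ℝ → ℝ) (σ : Ω → ℝ) (F : ℝ → ℝ)
    (hSmeas : Measurable S) (hσmeas : Measurable σ)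
    (hS0 : ∀ ω, S ω 0 = 0) (hSmono : ∀ ω, Monotone (S ω))
    (hSrightcont : ∀ ω, ∀ u : ℝ, ContinuousWithinAt (S ω) (Set.Ici u) u)
    (hσ0 : ∀ ω, 0 ≤ σ ω)
    (hindep : IndepFun σ S ℙ)
    (hF : ∀ v : ℝ, F v = (ℙ {ω : Ω | σ ω ≤ v}).toReal)
    (hFcont : ContinuousOn F (Set.Ici 0))
    (θ : ℝ → (ℝ → ℝ) → ℝ)
    (hθ : ∀ (t : ℝ) (η : ℝ → ℝ), θ t η = η (sInf {u : ℝ | 0 ≤ u ∧ t < η u}) - t)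
    (t s : ℝ) (ht : 0 ≤ t) (hs : 0 < s) :
    (ℙ {ω : Ω | s ≤ θ t (fun u => σ ω + S ω u)}).toReal
      = 1 - F (t + s) +
        ∫ v in Set.Icc (0:ℝ) t, (ℙ {ω : Ω | s ≤ θ (t - v) (S ω)}).toReal
          ∂(Measure.map σ ℙ) := by
  obtain rfl : θ = overshoot := funext₂ hθ
  have := Measure.isProbabilityMeasure_map (μ := ℙ) hσmeas.aemeasurable
  have hF_cdf : F = cdf (Measure.map σ ℙ) := funext fun v => by
    rw [hF, cdf_eq_real, measureReal_def, Measure.map_apply hσmeas measurableSet_Iic]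
    rfl
  have hcont : ContinuousWithinAt (cdf (Measure.map σ ℙ)) (Iio (t + s)) (t + s) :=
    ((hF_cdf ▸ hFcont).continuousAt (Ici_mem_nhds (by linarith))).continuousWithinAt
  have hσ_ae : ∀ᵐ v ∂(Measure.map σ ℙ), 0 ≤ v :=
    (ae_map_iff hσmeas.aemeasurable measurableSet_Ici).2 (ae_of_all _ hσ0)
  have hdisj : Disjoint (σ ⁻¹' Ici (t + s)) ((fun ω => (σ ω, S ω)) ⁻¹' delayedJumpsOver t s) :=
    disjoint_left.2 fun ω h1 h2 => by linarith [show t + s ≤ σ ω from h1, h2.1]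
  rw [setOf_le_overshoot_const_add_eq_union hSmono hSrightcont hS0 hs t,
    measure_union hdisj (hσmeas.prodMk hSmeas (measurableSet_delayedJumpsOver t s)),
    ENNReal.toReal_add (measure_ne_top _ _) (measure_ne_top _ _),
    ← Measure.map_apply hσmeas measurableSet_Ici, measure_Ici_toReal_eq_one_sub_cdf hcont, ← hF_cdf,
    hindep.measure_preimage_prodMk hσmeas hSmeas (measurableSet_delayedJumpsOver t s),
    lintegral_measure_delayedJumpsOver hσ_ae,
    ← integral_toReal (measurable_measure_jumpsOver_sub _ t s).aemeasurable
      (ae_of_all _ fun _ => measure_lt_top _ _)]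
  simp_rw [measure_le_overshoot_eq_map_jumpsOver ℙ hSmeas hSmono hSrightcont hs]
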